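/- Fix z ∈ ℝ^d and let x ∈ ℝ^d with x ≠ z. Write ψ = ‖z - x‖ and φ = σ(ψ). The function L'(x) = -log(σ(‖z - x‖)) is twice differentiable at x, and its second derivative at x is the symmetric bilinear form (u, v) ↦ (φ(1-φ)/ψ²) · ⟪z - x, u⟫ · ⟪z - x, v⟫ - ((1-φ)/ψ) · (⟪u, v⟫ - ⟪z - x, u⟫ · ⟪z - x, v⟫ / ψ²). -/

import Mathlib

/-!
`L'` is the radial function `x ↦ g ‖z - x‖` with `g = -log ∘ σ`, for which `g' = σ - 1` and
`g'' = σ (1 - σ)`. Away from its centre, a radial function has gradient `(g' r / r) • (x - z)`,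
and differentiating this once more gives the Hessian
`(g'' / r²) (z - x)(z - x)ᵀ + (g' / r) (I - (z - x)(z - x)ᵀ / r²)`.
-/

open RealInnerProductSpace

/-- The logistic sigmoid function. -/
noncomputable def sigmoid (t : ℝ) : ℝ := 1 / (1 + Real.exp (-t))

theorem sigmoid_eq_real_sigmoid : sigmoid = Real.sigmoid := by
  funext t
  rw [sigmoid, Real.sigmoid_def, one_div]

theorem hasDerivAt_sigmoid (t : ℝ) : HasDerivAt sigmoid (sigmoid t * (1 - sigmoid t)) t :=
  sigmoid_eq_real_sigmoid ▸ Real.hasDerivAt_sigmoid t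

theorem hasDerivAt_neg_log_sigmoid (t : ℝ) :
    HasDerivAt (fun t => -Real.log (sigmoid t)) (sigmoid t - 1) t := by
  have hσ : sigmoid t ≠ 0 := sigmoid_eq_real_sigmoid ▸ (Real.sigmoid_pos t).ne'
  refine ((hasDerivAt_sigmoid t).log hσ).neg.congr_deriv ?_
  field_simp
  ring

section Radial

variable {E : Type*} [NormedAddCommGroup E] [InnerProductSpace ℝ E]

theorem hasFDerivAt_norm_of_ne_zero {w : E} (hw : w ≠ 0) :
    HasFDerivAt (‖·‖) (‖w‖⁻¹ • innerSL ℝ w) w := by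
  have hw' : ‖w‖ ≠ 0 := norm_ne_zero_iff.mpr hw
  have hsqrt := (Real.hasDerivAt_sqrt (pow_ne_zero 2 hw')).comp_hasFDerivAt w
    (hasStrictFDerivAt_norm_sq w).hasFDerivAt
  simp only [Function.comp_def, Real.sqrt_sq (norm_nonneg _)] at hsqrt
  refine hsqrt.congr_fderiv ?_
  module

theorem hasFDerivAt_norm_sub_left {z y : E} (hy : y ≠ z) :
    HasFDerivAt (fun y => ‖z - y‖) (‖z - y‖⁻¹ • innerSL ℝ (y - z)) y := by
  have h := (hasFDerivAt_norm_of_ne_zero (sub_ne_zero.mpr hy)).comp y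
    ((hasFDerivAt_id y).sub_const z)
  simp only [Function.comp_def, norm_sub_rev _ z] at h
  exact h

/-- Over `ℝ`, the conjugate-linear `innerSL ℝ` is a linear map by `rfl`. -/
theorem hasFDerivAt_innerSL_sub_const (z x : E) :
    HasFDerivAt (fun y => innerSL ℝ (y - z)) (innerSL ℝ : E →L[ℝ] E →L[ℝ] ℝ) x :=
  (innerSL ℝ : E →L[ℝ] E →L[ℝ] ℝ).hasFDerivAt.comp x ((hasFDerivAt_id x).sub_const z)

theorem HasDerivAt.comp_norm_sub_left {g : ℝ → ℝ} {g' : ℝ} {z y : E} (hy : y ≠ z)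
    (hg : HasDerivAt g g' ‖z - y‖) :
    HasFDerivAt (fun y => g ‖z - y‖) ((g' / ‖z - y‖) • innerSL ℝ (y - z)) y := by
  have h := hg.comp_hasFDerivAt y (hasFDerivAt_norm_sub_left hy)
  rwa [smul_smul, ← div_eq_mul_inv] at h

theorem hessian_comp_norm_sub_left {g g' : ℝ → ℝ} {g'' : ℝ} {z x : E} (hx : x ≠ z)
    (hg : ∀ t, 0 < t → HasDerivAt g (g' t) t) (hg' : HasDerivAt g' g'' ‖z - x‖) :
    DifferentiableAt ℝ (fun y => g ‖z - y‖) x ∧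
    DifferentiableAt ℝ (fderiv ℝ fun y => g ‖z - y‖) x ∧
    ∀ u v, fderiv ℝ (fderiv ℝ fun y => g ‖z - y‖) x u v =
      g'' / ‖z - x‖ ^ 2 * (⟪z - x, u⟫ * ⟪z - x, v⟫) +
        g' ‖z - x‖ / ‖z - x‖ * (⟪u, v⟫ - ⟪z - x, u⟫ * ⟪z - x, v⟫ / ‖z - x‖ ^ 2) := by
  have hgrad : ∀ᶠ y in nhds x, HasFDerivAt (fun y => g ‖z - y‖)
      ((fun t => g' t / t) ‖z - y‖ • innerSL ℝ (y - z)) y := by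
    filter_upwards [isOpen_ne.mem_nhds hx] with y hy
    exact (hg _ (norm_pos_iff.mpr (sub_ne_zero.mpr hy.symm))).comp_norm_sub_left hy
  have hψ : ‖z - x‖ ≠ 0 := norm_ne_zero_iff.mpr (sub_ne_zero.mpr hx.symm)
  have hc : HasDerivAt (fun t => g' t / t) ((g'' * ‖z - x‖ - g' ‖z - x‖) / ‖z - x‖ ^ 2)
      ‖z - x‖ :=
    (hg'.div (hasDerivAt_id _) hψ).congr_deriv (by simp)
  have hHess := ((hc.comp_norm_sub_left hx).smul
    (hasFDerivAt_innerSL_sub_const z x)).congr_of_eventuallyEq (hgrad.mono fun y hy => hy.fderiv)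
  refine ⟨hgrad.self_of_nhds.differentiableAt, hHess.differentiableAt, fun u v => ?_⟩
  have hinnerSL : (innerSL ℝ : E →L[ℝ] E →L[ℝ] ℝ) u v = ⟪u, v⟫ := rfl
  rw [hHess.fderiv]
  simp only [add_apply, smul_apply, ContinuousLinearMap.smulRight_apply, innerSL_apply_apply,
    smul_eq_mul, hinnerSL, inner_sub_left]
  field_simp
  ring

end Radial

/-- For `x ≠ z`, writing `ψ = ‖z - x‖` and `φ = σ ψ`, the TransE loss term
`L' x = -log (σ ‖z - x‖)` is twice differentiable at `x`, with second derivative the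
symmetric bilinear form
`(u, v) ↦ (φ(1-φ)/ψ²) ⟪z-x, u⟫ ⟪z-x, v⟫ - ((1-φ)/ψ) (⟪u, v⟫ - ⟪z-x, u⟫ ⟪z-x, v⟫ / ψ²)`. -/
theorem transE_loss_hessian (d : ℕ) (z x : EuclideanSpace ℝ (Fin d)) (hx : x ≠ z) :
    DifferentiableAt ℝ
      (fun x : EuclideanSpace ℝ (Fin d) => -Real.log (sigmoid ‖z - x‖)) x ∧
    DifferentiableAt ℝ
      (fderiv ℝ (fun x : EuclideanSpace ℝ (Fin d) => -Real.log (sigmoid ‖z - x‖))) x ∧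
    ∀ u v : EuclideanSpace ℝ (Fin d),
      fderiv ℝ (fderiv ℝ
          (fun x : EuclideanSpace ℝ (Fin d) => -Real.log (sigmoid ‖z - x‖))) x u v =
        (sigmoid ‖z - x‖ * (1 - sigmoid ‖z - x‖) / ‖z - x‖ ^ 2) *
            (⟪z - x, u⟫ * ⟪z - x, v⟫) -
          ((1 - sigmoid ‖z - x‖) / ‖z - x‖) *
            (⟪u, v⟫ - ⟪z - x, u⟫ * ⟪z - x, v⟫ / ‖z - x‖ ^ 2) := by
  obtain ⟨hdiff, hdiff2, hhess⟩ := hessian_comp_norm_sub_left hx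
    (fun t _ => hasDerivAt_neg_log_sigmoid t) ((hasDerivAt_sigmoid _).sub_const 1)
  refine ⟨hdiff, hdiff2, fun u v => ?_⟩
  rw [hhess]
  ring
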